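/- Let X be a Hausdorff space and x, y ∈ X. Give the set P(X)(x,y) of paths from x to y and its subset R(X)(x,y) of regular paths from x to y the compact-open topology; let T_R(X)(x,y) be the quotient of R(X)(x,y) by the equivalence relation identifying p with p ∘ ρ for increasing self-homeomorphisms ρ of I, and let T(X)(x,y) be the quotient of P(X)(x,y) by reparametrization equivalence, both with the quotient topology. Then the map T_R(X)(x,y) → T(X)(x,y) induced by the inclusion R(X)(x,y) ↪ P(X)(x,y) is a homeomorphism. -/

import Mathlib

open unitInterval

/-- `φ` is a reparametrization of the unit interval: a continuous weakly
increasing self-map of `I` with `φ 0 = 0` and `φ 1 = 1` (such a map is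
automatically surjective). -/
def IsRepar (φ : I → I) : Prop :=
  Continuous φ ∧ Monotone φ ∧ φ 0 = 0 ∧ φ 1 = 1

/-- `p` is constant on the closed subinterval `[a, b]` of `I`. -/
def ConstOn {X : Type*} (p : I → X) (a b : I) : Prop :=
  ∀ s ∈ Set.Icc a b, ∀ t ∈ Set.Icc a b, p s = p t


/-- A path `p : I → X` is regular if it is constant on no nondegenerate
closed subinterval of `I`, unless it is constant on all of `I`. -/
def IsRegularPath {X : Type*} (p : I → X) : Prop :=
  (∀ s t : I, p s = p t) ∨ ∀ a b : I, a < b → ¬ ConstOn p a b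

/-- Two paths `p, q : I → X` are reparametrization equivalent if
`p ∘ φ = q ∘ ψ` for some reparametrizations `φ, ψ` of `I`. -/
def ReparEquiv {X : Type*} (p q : I → X) : Prop :=
  ∃ φ ψ : I → I, IsRepar φ ∧ IsRepar ψ ∧ p ∘ φ = q ∘ ψ

/-- The space `P(X)(x,y)` of paths from `x` to `y`, with the compact-open
topology. -/
abbrev PathXY (X : Type*) [TopologicalSpace X] (x y : X) : Type _ :=
  {f : C(I, X) // f 0 = x ∧ f 1 = y}

/-- The subspace `R(X)(x,y)` of regular paths from `x` to `y`. -/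
abbrev RegXY (X : Type*) [TopologicalSpace X] (x y : X) : Type _ :=
  {f : C(I, X) // (f 0 = x ∧ f 1 = y) ∧ IsRegularPath f}

/-- The relation on regular paths identifying `p` with `p ∘ ρ` for
increasing self-homeomorphisms `ρ` of `I`; its quotient is `T_R(X)(x,y)`. -/
def HomeoRel {X : Type*} [TopologicalSpace X] {x y : X}
    (p q : RegXY X x y) : Prop :=
  ∃ ρ : I → I, IsRepar ρ ∧ StrictMono ρ ∧ ∀ t : I, q.1 t = p.1 (ρ t)

/-- Reparametrization equivalence on `P(X)(x,y)`; its quotient is the trace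
space `T(X)(x,y)`. -/
def TraceRel {X : Type*} [TopologicalSpace X] {x y : X}
    (p q : PathXY X x y) : Prop :=
  ReparEquiv (p.1 : I → X) (q.1 : I → X)

/-!
Every path factors as `q ∘ φ` with `q` regular and `φ` a reparametrization collapsing exactly the
maximal intervals of constancy; `φ` comes from a Cantor order isomorphism between a countable
dense family of these intervals and the rationals of `(0, 1)`. Reparametrization equivalent
regular paths differ by an increasing homeomorphism, so regularization is inverse to the map
`T_R(X)(x,y) → T(X)(x,y)`. For continuity of regularization, pull a compact-open neighbourhood
of the regularization of `p` back along the reparametrization of `p`: for `q` in the resulting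
neighbourhood of `p`, the two reparametrizations trace a monotone path in an open subset of
`I × I`, and perturbing it into the graph of an increasing homeomorphism `ρ` puts the
regularization of `q`, composed with `ρ`, into the given neighbourhood.
-/

open Set Filter Topology

section Repar

variable {φ ψ : I → I}

lemma isRepar_id : IsRepar (id : I → I) :=
  ⟨continuous_id, monotone_id, rfl, rfl⟩

lemma IsRepar.comp (hφ : IsRepar φ) (hψ : IsRepar ψ) : IsRepar (φ ∘ ψ) :=
  ⟨hφ.1.comp hψ.1, hφ.2.1.comp hψ.2.1, by simp [hψ.2.2.1, hφ.2.2.1],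
    by simp [hψ.2.2.2, hφ.2.2.2]⟩

lemma IsRepar.surjOn_Icc (hφ : IsRepar φ) {a b : I} (hab : a ≤ b) :
    SurjOn φ (Icc a b) (Icc (φ a) (φ b)) :=
  intermediate_value_Icc hab hφ.1.continuousOn

lemma IsRepar.surjective (hφ : IsRepar φ) : Function.Surjective φ := fun u => by
  obtain ⟨t, -, ht⟩ := hφ.surjOn_Icc (zero_le_one' I)
    (by rw [hφ.2.2.1, hφ.2.2.2]; exact ⟨nonneg', le_one'⟩ : u ∈ Icc (φ 0) (φ 1))
  exact ⟨t, ht⟩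

lemma IsRepar.exists_comp_eq {Y : Type*} [TopologicalSpace Y] (hφ : IsRepar φ) (f : C(I, Y))
    (hf : ∀ t s, φ t = φ s → f t = f s) : ∃ g : C(I, Y), ∀ t, f t = g (φ t) := by
  have hq : IsQuotientMap (⟨φ, hφ.1⟩ : C(I, I)) :=
    hφ.1.isClosedMap.isQuotientMap hφ.1 hφ.surjective
  exact ⟨hq.lift f hf, fun t => (DFunLike.congr_fun (hq.lift_comp f hf) t).symm⟩

lemma IsRepar.of_comp_eq {ρ : I → I} (hφ : IsRepar φ) (hψ : IsRepar ψ) (hρ : Continuous ρ)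
    (h : ∀ t, φ t = ρ (ψ t)) : IsRepar ρ := by
  refine ⟨hρ, fun u v huv => ?_, by simpa [hψ.2.2.1, hφ.2.2.1] using (h 0).symm,
    by simpa [hψ.2.2.2, hφ.2.2.2] using (h 1).symm⟩
  obtain ⟨s, rfl⟩ := hψ.surjective u
  obtain ⟨t, rfl⟩ := hψ.surjective v
  rcases huv.eq_or_lt with heq | hlt
  · rw [heq]
  · rw [← h, ← h]
    exact hφ.2.1 (hψ.2.1.reflect_lt hlt).le

lemma IsRepar.exists_strictMono_dist_lt (hφ : IsRepar φ) {ε : ℝ} (hε : 0 < ε) :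
    ∃ φ' : I → I, IsRepar φ' ∧ StrictMono φ' ∧ ∀ t, dist (φ' t) (φ t) < ε := by
  set c : ℝ := min (ε / 2) 1
  have hc : 0 < c := lt_min (half_pos hε) one_pos
  have hc1 : c ≤ 1 := min_le_right _ _
  have hmem : ∀ t, (1 - c) * (φ t : ℝ) + c * t ∈ I := fun t =>
    convex_Icc (0 : ℝ) 1 (φ t).2 t.2 (sub_nonneg.2 hc1) hc.le (by ring)
  refine ⟨fun t => ⟨_, hmem t⟩, ⟨?_, ?_, ?_, ?_⟩, ?_, fun t => ?_⟩
  · have := hφ.1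
    exact Continuous.subtype_mk (by fun_prop) _
  · exact fun a b hab => Subtype.coe_le_coe.1 <| add_le_add
      (mul_le_mul_of_nonneg_left (hφ.2.1 hab) (sub_nonneg.2 hc1))
      (mul_le_mul_of_nonneg_left hab hc.le)
  · exact Subtype.ext (by simp [hφ.2.2.1])
  · exact Subtype.ext (by simp [hφ.2.2.2])
  · exact fun a b hab => Subtype.coe_lt_coe.1 <| add_lt_add_of_le_of_lt
      (mul_le_mul_of_nonneg_left (hφ.2.1 hab.le) (sub_nonneg.2 hc1))
      (mul_lt_mul_of_pos_left hab hc)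
  · have hd : |(t : ℝ) - φ t| ≤ 1 := abs_sub_le_iff.2
      ⟨by linarith [t.2.2, (φ t).2.1], by linarith [t.2.1, (φ t).2.2]⟩
    calc dist _ (φ t) = |(1 - c) * (φ t : ℝ) + c * t - φ t| := Subtype.dist_eq _ _
      _ = c * |(t : ℝ) - φ t| := by
          rw [show (1 - c) * (φ t : ℝ) + c * t - φ t = c * (t - φ t) by ring, abs_mul,
            abs_of_pos hc]
      _ ≤ c := mul_le_of_le_one_right hc.le hd
      _ < ε := (min_le_left _ _).trans_lt (half_lt_self hε)

/-- Perturb both coordinates of `t ↦ (α t, β t)` to strictly increasing ones, then invert the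
first. -/
lemma exists_strictMono_graph_subset {α β : I → I} (hα : IsRepar α) (hβ : IsRepar β)
    {O : Set (I × I)} (hO : IsOpen O) (hαβ : ∀ t, (α t, β t) ∈ O) :
    ∃ ρ : I → I, IsRepar ρ ∧ StrictMono ρ ∧ ∀ u, (u, ρ u) ∈ O := by
  obtain ⟨ε, hε, hεO⟩ := (isCompact_range (hα.1.prodMk hβ.1)).exists_thickening_subset_open hO
    (range_subset_iff.2 hαβ)
  obtain ⟨α', hα', hα's, hαd⟩ := hα.exists_strictMono_dist_lt hε
  obtain ⟨β', hβ', hβ's, hβd⟩ := hβ.exists_strictMono_dist_lt hε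
  set e : I ≃o I := hα's.orderIsoOfSurjective α' hα'.surjective
  have he : ∀ t, e t = α' t := fun _ => rfl
  refine ⟨β' ∘ e.symm, ⟨hβ'.1.comp e.symm.continuous, hβ's.monotone.comp e.symm.monotone, ?_, ?_⟩,
    hβ's.comp e.symm.strictMono, fun u => ?_⟩
  · simp [e.symm_apply_eq.2 (hα'.2.2.1.symm.trans (he 0).symm), hβ'.2.2.1]
  · simp [e.symm_apply_eq.2 (hα'.2.2.2.symm.trans (he 1).symm), hβ'.2.2.2]
  · obtain ⟨τ, rfl⟩ := e.surjective u
    simp only [Function.comp_apply, e.symm_apply_apply]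
    rw [he]
    exact hεO (Metric.mem_thickening_iff.2 ⟨_, mem_range_self τ,
      by rw [Prod.dist_eq]; exact max_lt (hαd τ) (hβd τ)⟩)

end Repar

section ConstClass

variable {X : Type*} {p : I → X} {t s : I}

/-- The maximal closed interval of `I` containing `t` on which `p` is constant. -/
def constClass (p : I → X) (t : I) : Set I :=
  connectedComponentIn (p ⁻¹' {p t}) t

lemma mem_constClass_self : t ∈ constClass p t :=
  mem_connectedComponentIn rfl

lemma apply_eq_of_mem_constClass (hs : s ∈ constClass p t) : p s = p t :=
  connectedComponentIn_subset (p ⁻¹' {p t}) t hs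

lemma mem_constClass_iff : s ∈ constClass p t ↔ ∀ u ∈ uIcc t s, p u = p t := by
  refine ⟨fun hs u hu => apply_eq_of_mem_constClass ?_, fun h => ?_⟩
  · exact isPreconnected_connectedComponentIn.ordConnected.uIcc_subset mem_constClass_self hs hu
  · exact isPreconnected_uIcc.subset_connectedComponentIn left_mem_uIcc h right_mem_uIcc

lemma mem_constClass_iff_constOn (hts : t ≤ s) : s ∈ constClass p t ↔ ConstOn p t s := by
  rw [mem_constClass_iff, uIcc_of_le hts]
  exact ⟨fun h u hu w hw => (h u hu).trans (h w hw).symm,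
    fun h u hu => h u hu t (left_mem_Icc.2 hts)⟩

lemma constClass_eq_of_mem (hs : s ∈ constClass p t) : constClass p s = constClass p t := by
  rw [constClass, apply_eq_of_mem_constClass hs, ← connectedComponentIn_eq hs]
  rfl

lemma mem_constClass_comm : s ∈ constClass p t ↔ t ∈ constClass p s :=
  ⟨fun hs => constClass_eq_of_mem hs ▸ mem_constClass_self,
    fun ht => constClass_eq_of_mem ht ▸ mem_constClass_self⟩

noncomputable def classMax (p : I → X) (t : I) : I :=
  sSup (constClass p t)

lemma le_classMax : t ≤ classMax p t :=
  le_sSup mem_constClass_self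

variable [TopologicalSpace X] [T2Space X] (hp : Continuous p)
include hp

lemma isClosed_constClass (t : I) : IsClosed (constClass p t) :=
  closure_subset_iff_isClosed.1 <| isPreconnected_connectedComponentIn.closure
    |>.subset_connectedComponentIn (subset_closure mem_constClass_self)
      (closure_minimal (connectedComponentIn_subset _ _) (isClosed_singleton.preimage hp))

lemma classMax_mem : classMax p t ∈ constClass p t :=
  (isClosed_constClass hp t).sSup_mem ⟨t, mem_constClass_self⟩

lemma classMax_eq_iff : classMax p t = classMax p s ↔ s ∈ constClass p t := by
  refine ⟨fun h => ?_, fun hs => by rw [classMax, classMax, constClass_eq_of_mem hs]⟩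
  rw [← constClass_eq_of_mem (classMax_mem hp), h, constClass_eq_of_mem (classMax_mem hp)]
  exact mem_constClass_self

lemma classMax_classMax : classMax p (classMax p t) = classMax p t :=
  ((classMax_eq_iff hp).2 (classMax_mem hp)).symm

lemma monotone_classMax : Monotone (classMax p) := by
  intro t s hts
  by_contra! hlt
  have hs : s ∈ constClass p t := isPreconnected_connectedComponentIn.ordConnected.out
    mem_constClass_self (classMax_mem hp) ⟨hts, le_classMax.trans hlt.le⟩
  exact hlt.ne ((classMax_eq_iff hp).2 hs).symm

lemma classMax_zero_lt_one (hnc : ¬ ∀ s t, p s = p t) : classMax p 0 < classMax p 1 := by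
  refine (monotone_classMax hp (zero_le_one' I)).lt_of_ne fun h => hnc fun s t => ?_
  have h01 := mem_constClass_iff.1 ((classMax_eq_iff hp).1 h)
  have hI : ∀ u : I, u ∈ uIcc 0 1 := fun u => by
    rw [uIcc_of_le (zero_le_one' I)]; exact ⟨nonneg', le_one'⟩
  rw [h01 s (hI s), h01 t (hI t)]

lemma exists_classMax_btwn {D : Set I} (hD : Dense D) (h : classMax p t < classMax p s) :
    ∃ d ∈ D, classMax p t < classMax p d ∧ classMax p d < classMax p s := by
  -- Otherwise the closed class of `s` would contain the closure of the gap, hence `classMax p t`.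
  have hU : (Ioo (classMax p t) (classMax p s) \ constClass p s).Nonempty := by
    by_contra! hU
    have hsub : Icc (classMax p t) (classMax p s) ⊆ constClass p s := by
      rw [← closure_Ioo h.ne]
      exact closure_minimal (sdiff_eq_empty.1 hU) (isClosed_constClass hp s)
    have hts : s ∈ constClass p t := by
      rw [← constClass_eq_of_mem (classMax_mem hp), constClass_eq_of_mem (hsub ⟨le_rfl, h.le⟩)]
      exact mem_constClass_self
    exact h.ne ((classMax_eq_iff hp).2 hts)
  obtain ⟨d, hdD, ⟨hd1, hd2⟩, hds⟩ := hD.exists_mem_open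
    (isOpen_Ioo.sdiff (isClosed_constClass hp s)) hU
  refine ⟨d, hdD, hd1.trans_le le_classMax, ?_⟩
  refine (classMax_classMax hp (t := s) ▸ monotone_classMax hp hd2.le).lt_of_ne fun heq => hds ?_
  exact mem_constClass_comm.1 ((classMax_eq_iff hp).1 heq)

end ConstClass

lemma exists_strictMono_dense_btwn (E : Type*) [LinearOrder E] [Countable E] [DenselyOrdered E]
    [NoMinOrder E] [NoMaxOrder E] [Nonempty E] :
    ∃ f : E → I, StrictMono f ∧ ∀ a b : I, a < b → ∃ e, a < f e ∧ f e < b := by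
  have : Nonempty (Ioo (0 : ℚ) 1) := ⟨⟨1 / 2, by norm_num, by norm_num⟩⟩
  obtain ⟨g⟩ := Order.iso_of_countable_dense E (Ioo (0 : ℚ) 1)
  refine ⟨fun e => ⟨(g e : ℚ), by exact_mod_cast (g e).2.1.le, by exact_mod_cast (g e).2.2.le⟩,
    fun a b hab => Subtype.mk_lt_mk.2 (by exact_mod_cast g.strictMono hab), fun a b hab => ?_⟩
  obtain ⟨q, hq1, hq2⟩ := exists_rat_btwn (Subtype.coe_lt_coe.2 hab)
  have hq : q ∈ Ioo (0 : ℚ) 1 :=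
    ⟨by exact_mod_cast a.2.1.trans_lt hq1, by exact_mod_cast hq2.trans_le b.2.2⟩
  exact ⟨g.symm ⟨q, hq⟩, Subtype.coe_lt_coe.1 (by simpa using hq1),
    Subtype.coe_lt_coe.1 (by simpa using hq2)⟩

lemma exists_isRepar_eq_iff_of_strictMono {β : I → I} (hβ : Monotone β) {E : Set I}
    (hE : E ⊆ Ioo (β 0) (β 1)) (hfix : ∀ e ∈ E, β e = e)
    (hsep : ∀ t s, β t < β s → ∃ e ∈ E, β t < e ∧ e < β s) {f : E → I} (hf : StrictMono f)
    (hf_btwn : ∀ a b : I, a < b → ∃ e, a < f e ∧ f e < b) :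
    ∃ φ : I → I, IsRepar φ ∧ ∀ t s, φ t = φ s ↔ β t = β s := by
  set φ : I → I := fun t => sSup (f '' {e | (e : I) ≤ β t})
  have hφf : ∀ e : E, φ e = f e := fun e => IsGreatest.csSup_eq ⟨⟨e, (hfix e e.2).ge, rfl⟩, by
    rintro _ ⟨e', he', rfl⟩; exact hf.monotone (Subtype.coe_le_coe.1 (he'.trans_eq (hfix e e.2)))⟩
  have hφlt : ∀ t s, β t < β s → φ t < φ s := fun t s h => by
    obtain ⟨e₁, he₁, h₁, h₁s⟩ := hsep t s h
    obtain ⟨e₂, he₂, h₁₂, h₂s⟩ := hsep e₁ s (by rwa [hfix e₁ he₁])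
    calc φ t ≤ f ⟨e₁, he₁⟩ := sSup_le <| by
          rintro _ ⟨e, he, rfl⟩; exact hf.monotone (Subtype.coe_le_coe.1 (he.trans h₁.le))
      _ < f ⟨e₂, he₂⟩ := hf (by rwa [hfix e₁ he₁] at h₁₂)
      _ ≤ φ s := le_sSup ⟨⟨e₂, he₂⟩, h₂s.le, rfl⟩
  have hmono : Monotone φ := fun t s hts => sSup_le_sSup (image_mono fun e he => he.trans (hβ hts))
  have hdense : DenseRange φ := dense_of_exists_between fun a b hab => by
    obtain ⟨e, h1, h2⟩ := hf_btwn a b hab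
    exact ⟨φ e, mem_range_self _, by rwa [hφf], by rwa [hφf]⟩
  refine ⟨φ, ⟨hmono.continuous_of_denseRange hdense, hmono, ?_, ?_⟩, fun t s => ?_⟩
  · have hempty : {e : E | (e : I) ≤ β 0} = ∅ :=
      eq_empty_of_forall_notMem fun e he => not_le.2 (hE e.2).1 he
    simp only [φ, hempty, image_empty, sSup_empty]
    rfl
  · refine le_antisymm le_one' (le_of_forall_lt fun c hc => ?_)
    obtain ⟨e, h1, -⟩ := hf_btwn c 1 hc
    exact h1.trans_le (le_sSup ⟨e, (hE e.2).2.le, rfl⟩)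
  · refine ⟨fun h => ?_, fun h => by simp only [φ, h]⟩
    by_contra hne
    rcases lt_or_gt_of_ne hne with hlt | hlt
    · exact (hφlt t s hlt).ne h
    · exact (hφlt s t hlt).ne' h

theorem exists_isRepar_eq_iff {β : I → I} (hβ : Monotone β) {E : Set I} (hE : E.Countable)
    (hfix : ∀ e ∈ E, β e = e) (hsep : ∀ t s, β t < β s → ∃ e ∈ E, β t < e ∧ e < β s)
    (h01 : β 0 < β 1) : ∃ φ : I → I, IsRepar φ ∧ ∀ t s, φ t = φ s ↔ β t = β s := by
  set E' : Set I := E ∩ Ioo (β 0) (β 1)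
  have hfix' : ∀ e : E', β e = e := fun e => hfix e e.2.1
  have hsep' : ∀ t s, β t < β s → ∃ e : E', β t < e ∧ (e : I) < β s := fun t s h => by
    obtain ⟨e, he, h1, h2⟩ := hsep t s h
    exact ⟨⟨e, he, (hβ nonneg').trans_lt h1, h2.trans_le (hβ le_one')⟩, h1, h2⟩
  have : Countable E' := (hE.mono inter_subset_left).to_subtype
  have : DenselyOrdered E' := ⟨fun a b hab => by
    obtain ⟨e, h1, h2⟩ := hsep' a b (by rwa [hfix', hfix'])
    exact ⟨e, by rwa [hfix'] at h1, by rwa [hfix'] at h2⟩⟩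
  have : NoMinOrder E' := ⟨fun a => by
    obtain ⟨e, -, h2⟩ := hsep' 0 a (by rw [hfix']; exact a.2.2.1)
    exact ⟨e, by rwa [hfix'] at h2⟩⟩
  have : NoMaxOrder E' := ⟨fun a => by
    obtain ⟨e, h1, -⟩ := hsep' a 1 (by rw [hfix']; exact a.2.2.2)
    exact ⟨e, by rwa [hfix'] at h1⟩⟩
  have : Nonempty E' := let ⟨e, _⟩ := hsep' 0 1 h01; ⟨e⟩
  obtain ⟨f, hf, hf_btwn⟩ := exists_strictMono_dense_btwn E'
  exact exists_isRepar_eq_iff_of_strictMono hβ inter_subset_right (fun e he => hfix e he.1)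
    (fun t s h => let ⟨e, h1, h2⟩ := hsep' t s h; ⟨e, e.2, h1, h2⟩) hf hf_btwn

section Regular

variable {X : Type*} {p q : I → X} {φ ψ ρ : I → I}

lemma isRegularPath_of_comp (hφ : IsRepar φ) (h : ∀ t, p t = q (φ t))
    (hfib : ∀ t s, t ≤ s → ConstOn p t s → φ t = φ s) : IsRegularPath q := by
  refine Or.inr fun a b hab hq => ?_
  obtain ⟨ta, rfl⟩ := hφ.surjective a
  obtain ⟨tb, rfl⟩ := hφ.surjective b
  have htab : ta ≤ tb := (hφ.2.1.reflect_lt hab).le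
  refine hab.ne (hfib ta tb htab fun u hu w hw => ?_)
  rw [h u, h w]
  exact hq _ ⟨hφ.2.1 hu.1, hφ.2.1 hu.2⟩ _ ⟨hφ.2.1 hw.1, hφ.2.1 hw.2⟩

lemma IsRegularPath.comp_strictMono (hp : IsRegularPath p) (hρ : IsRepar ρ) (hρs : StrictMono ρ) :
    IsRegularPath (p ∘ ρ) := by
  refine hp.imp (fun hc s t => hc _ _) fun hp a b hab hc => hp _ _ (hρs hab) fun u hu w hw => ?_
  obtain ⟨τ, hτ, rfl⟩ := hρ.surjOn_Icc hab.le hu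
  obtain ⟨τ', hτ', rfl⟩ := hρ.surjOn_Icc hab.le hw
  exact hc τ hτ τ' hτ'

lemma ReparEquiv.refl (p : I → X) : ReparEquiv p p :=
  ⟨id, id, isRepar_id, isRepar_id, rfl⟩

lemma ReparEquiv.of_comp {p' q' : I → X} {α β : I → I} (hα : IsRepar α) (hβ : IsRepar β)
    (hp : ∀ t, p t = p' (α t)) (hq : ∀ t, q t = q' (β t)) (h : ReparEquiv p q) :
    ReparEquiv p' q' := by
  obtain ⟨φ, ψ, hφ, hψ, hpq⟩ := h
  exact ⟨α ∘ φ, β ∘ ψ, hα.comp hφ, hβ.comp hψ,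
    funext fun t => by simpa [hp, hq] using congrFun hpq t⟩

lemma eq_of_comp_eq_of_forall_not_constOn (hp : ∀ a b, a < b → ¬ ConstOn p a b)
    (hφ : IsRepar φ) (hψ : IsRepar ψ) (h : p ∘ φ = q ∘ ψ) {t t' : I} (htt' : ψ t = ψ t') :
    φ t = φ t' := by
  wlog hle : t ≤ t' generalizing t t'
  · exact (this htt'.symm (le_of_not_ge hle)).symm
  refine (hφ.2.1 hle).eq_of_not_lt fun hlt => hp _ _ hlt fun u hu w hw => ?_
  have hpq : ∀ τ ∈ Icc t t', p (φ τ) = q (ψ t) := fun τ hτ =>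
    (congrFun h τ).trans (congrArg q (le_antisymm (htt' ▸ hψ.2.1 hτ.2) (hψ.2.1 hτ.1)))
  obtain ⟨τ, hτ, rfl⟩ := hφ.surjOn_Icc hle hu
  obtain ⟨τ', hτ', rfl⟩ := hφ.surjOn_Icc hle hw
  rw [hpq τ hτ, hpq τ' hτ']

lemma strictMono_of_forall_not_constOn (hq : ∀ a b, a < b → ¬ ConstOn q a b) (hρ : Monotone ρ)
    (h : ∀ t, q t = p (ρ t)) : StrictMono ρ := fun a b hab =>
  (hρ hab.le).lt_of_ne fun heq => hq a b hab fun u hu w hw => by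
    have hρc : ∀ τ ∈ Icc a b, ρ τ = ρ a := fun τ hτ =>
      le_antisymm (heq ▸ hρ hτ.2) (hρ hτ.1)
    rw [h u, h w, hρc u hu, hρc w hw]

theorem IsRegularPath.exists_strictMono_of_reparEquiv (hp : IsRegularPath p)
    (hq : IsRegularPath q) (h : ReparEquiv p q) :
    ∃ ρ : I → I, IsRepar ρ ∧ StrictMono ρ ∧ ∀ t, q t = p (ρ t) := by
  obtain ⟨φ, ψ, hφ, hψ, hpq⟩ := h
  rcases hp with hpc | hpr
  · refine ⟨id, isRepar_id, strictMono_id, fun t => ?_⟩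
    obtain ⟨s, rfl⟩ := hψ.surjective t
    exact (congrFun hpq s).symm.trans (hpc _ _)
  have hqr : ∀ a b, a < b → ¬ ConstOn q a b := hq.resolve_left fun hqc =>
    hpr 0 1 zero_lt_one fun u _ w _ => by
      obtain ⟨s, rfl⟩ := hφ.surjective u
      obtain ⟨t, rfl⟩ := hφ.surjective w
      exact (congrFun hpq s).trans ((hqc _ _).trans (congrFun hpq t).symm)
  obtain ⟨ρ, hρ⟩ := hψ.exists_comp_eq ⟨φ, hφ.1⟩ fun t t' =>
    eq_of_comp_eq_of_forall_not_constOn hpr hφ hψ hpq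
  have hρr : IsRepar ρ := hφ.of_comp_eq hψ ρ.continuous hρ
  have hqρ : ∀ t, q t = p (ρ t) := fun t => by
    obtain ⟨s, rfl⟩ := hψ.surjective t
    rw [← hρ s]
    exact (congrFun hpq s).symm
  exact ⟨ρ, hρr, strictMono_of_forall_not_constOn hqr hρr.2.1 hqρ, hqρ⟩

variable [TopologicalSpace X] [T2Space X]

theorem exists_isRegularPath_comp (p : C(I, X)) :
    ∃ (q : C(I, X)) (φ : I → I), IsRepar φ ∧ IsRegularPath q ∧ ∀ t, p t = q (φ t) := by
  by_cases hconst : ∀ s t, p s = p t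
  · exact ⟨p, id, isRepar_id, Or.inl hconst, fun _ => rfl⟩
  have hp := p.continuous
  obtain ⟨D, hDc, hD⟩ := TopologicalSpace.exists_countable_dense I
  obtain ⟨φ, hφ, hfib⟩ := exists_isRepar_eq_iff (monotone_classMax hp) (hDc.image (classMax p))
    (by rintro _ ⟨d, -, rfl⟩; exact classMax_classMax hp)
    (fun t s h => by
      obtain ⟨d, hd, h1, h2⟩ := exists_classMax_btwn hp hD h
      exact ⟨_, mem_image_of_mem _ hd, h1, h2⟩)
    (classMax_zero_lt_one hp hconst)
  obtain ⟨q, hq⟩ := hφ.exists_comp_eq p fun t s h =>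
    (apply_eq_of_mem_constClass (((hfib t s).trans (classMax_eq_iff hp)).1 h)).symm
  refine ⟨q, φ, hφ, isRegularPath_of_comp hφ hq fun t s hts hc => ?_, hq⟩
  exact ((hfib t s).trans (classMax_eq_iff hp)).2 ((mem_constClass_iff_constOn hts).2 hc)

end Regular

section TraceSpace

variable {X : Type*} [TopologicalSpace X] {x y : X}

/-- The hypotheses say that the monotone path `t ↦ (φ t, ψ t)` runs in an open subset of `I × I`,
so the graph of a suitable increasing homeomorphism runs there too. -/
lemma exists_strictMono_mapsTo_comp {g : C(I, X)} {φ ψ : I → I} (hφ : IsRepar φ)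
    (hψ : IsRepar ψ) {S : Set (Set I × Set X)} (hS : S.Finite)
    (hSKU : ∀ K U, (K, U) ∈ S → IsClosed K ∧ IsOpen U)
    (h : ∀ K U, (K, U) ∈ S → MapsTo (g ∘ ψ) (φ ⁻¹' K) U) :
    ∃ ρ : I → I, IsRepar ρ ∧ StrictMono ρ ∧ ∀ K U, (K, U) ∈ S → MapsTo (g ∘ ρ) K U := by
  set O : Set (I × I) := ⋂ KU ∈ S, {z | z.1 ∈ KU.1 → g z.2 ∈ KU.2}
  have hO : IsOpen O := hS.isOpen_biInter fun KU hKU => by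
    simp only [imp_iff_not_or, ofPred_or]
    exact ((hSKU _ _ hKU).1.preimage continuous_fst).isOpen_compl.union
      ((hSKU _ _ hKU).2.preimage (g.continuous.comp continuous_snd))
  obtain ⟨ρ, hρ, hρs, hρO⟩ := exists_strictMono_graph_subset hφ hψ hO
    (fun t => mem_iInter₂.2 fun KU hKU ht => h _ _ hKU ht)
  exact ⟨ρ, hρ, hρs, fun K U hKU u hu => mem_iInter₂.1 (hρO u) (K, U) hKU hu⟩

def RegXY.reparam (r : RegXY X x y) {ρ : I → I} (hρ : IsRepar ρ) (hρs : StrictMono ρ) :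
    RegXY X x y :=
  ⟨r.1.comp ⟨ρ, hρ.1⟩, ⟨by simp [hρ.2.2.1, r.2.1.1], by simp [hρ.2.2.2, r.2.1.2]⟩,
    r.2.2.comp_strictMono hρ hρs⟩

lemma homeoRel_reparam (r : RegXY X x y) {ρ : I → I} (hρ : IsRepar ρ) (hρs : StrictMono ρ) :
    HomeoRel r (r.reparam hρ hρs) :=
  ⟨ρ, hρ, hρs, fun _ => rfl⟩

/-- Near `pp`, `Reg qq` can be reparametrized into any given compact-open neighbourhood of
`Reg pp`. -/
theorem continuous_quotMk_regularization (Reg : PathXY X x y → RegXY X x y)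
    (Φ : PathXY X x y → I → I) (hΦ : ∀ pp, IsRepar (Φ pp))
    (hfac : ∀ pp t, pp.1 t = (Reg pp).1 (Φ pp t)) :
    Continuous fun pp => Quot.mk (@HomeoRel X _ x y) (Reg pp) := by
  refine continuous_def.2 fun W hW => isOpen_iff_mem_nhds.2 fun pp hpp => ?_
  obtain ⟨V₀, hV₀, hV₀W⟩ := (mem_nhds_induced Subtype.val _ _).1
    ((hW.preimage continuous_quot_mk).mem_nhds hpp)
  obtain ⟨S, hS, hSKU, hSV₀⟩ := ContinuousMap.mem_nhds_iff.1 hV₀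
  have hnear : ∀ᶠ qq in 𝓝 pp, ∀ KU ∈ S, MapsTo (qq : PathXY X x y).1 (Φ pp ⁻¹' KU.1) KU.2 :=
    (eventually_all_finite hS).2 fun KU hKU =>
      have ⟨hK, hU, hmaps⟩ := hSKU _ _ hKU
      continuous_subtype_val.continuousAt.eventually <| ContinuousMap.eventually_mapsTo
        (hK.isClosed.preimage (hΦ pp).1).isCompact hU fun t ht => hfac pp t ▸ hmaps ht
  filter_upwards [hnear] with qq hqq
  obtain ⟨ρ, hρ, hρs, hmaps⟩ := exists_strictMono_mapsTo_comp (g := (Reg qq).1) (hΦ pp) (hΦ qq) hS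
    (fun K U hKU => ⟨(hSKU K U hKU).1.isClosed, (hSKU K U hKU).2.1⟩)
    (fun K U hKU t ht => (hfac qq t ▸ hqq (K, U) hKU ht : (Reg qq).1 (Φ qq t) ∈ U))
  show Quot.mk _ (Reg qq) ∈ W
  rw [Quot.sound (homeoRel_reparam (Reg qq) hρ hρs)]
  exact hV₀W (hSV₀ hmaps)

lemma PathXY.exists_regXY_comp [T2Space X] (pp : PathXY X x y) :
    ∃ (r : RegXY X x y) (φ : I → I), IsRepar φ ∧ ∀ t, pp.1 t = r.1 (φ t) := by
  obtain ⟨q, φ, hφ, hq, hpq⟩ := exists_isRegularPath_comp pp.1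
  exact ⟨⟨q, ⟨by rw [← hφ.2.2.1, ← hpq, pp.2.1], by rw [← hφ.2.2.2, ← hpq, pp.2.2]⟩, hq⟩,
    φ, hφ, hpq⟩

end TraceSpace

/-- The map `T_R(X)(x,y) → T(X)(x,y)` induced by the inclusion
`R(X)(x,y) ↪ P(X)(x,y)` is a homeomorphism (quotients carry the quotient
topology). -/
theorem traceSpace_homeomorph_regularTraceSpace
    {X : Type*} [TopologicalSpace X] [T2Space X] (x y : X) :
    ∃ h : Quot (@HomeoRel X _ x y) ≃ₜ Quot (@TraceRel X _ x y),
      ∀ p : RegXY X x y,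
        h (Quot.mk _ p) = Quot.mk _ (⟨p.1, p.2.1⟩ : PathXY X x y) := by
  choose Reg Φ hΦ hfac using fun pp : PathXY X x y => pp.exists_regXY_comp
  have homeoRel_of_reparEquiv (r r' : RegXY X x y) (h : ReparEquiv r.1 r'.1) : HomeoRel r r' :=
    r.2.2.exists_strictMono_of_reparEquiv r'.2.2 h
  let incl : RegXY X x y → PathXY X x y := fun r => ⟨r.1, r.2.1⟩
  let toTrace : Quot (@HomeoRel X _ x y) → Quot (@TraceRel X _ x y) :=
    Quot.lift (fun r => Quot.mk _ (incl r)) fun _ _ ⟨ρ, hρ, _, hr⟩ =>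
      Quot.sound ⟨ρ, id, hρ, isRepar_id, funext fun t => (hr t).symm⟩
  let ofTrace : Quot (@TraceRel X _ x y) → Quot (@HomeoRel X _ x y) :=
    Quot.lift (fun pp => Quot.mk _ (Reg pp)) fun pp pp' h =>
      Quot.sound (homeoRel_of_reparEquiv _ _ (h.of_comp (hΦ pp) (hΦ pp') (hfac pp) (hfac pp')))
  refine ⟨⟨⟨toTrace, ofTrace, ?_, ?_⟩, ?_, ?_⟩, fun _ => rfl⟩
  · exact Quot.ind fun r => Quot.sound <| homeoRel_of_reparEquiv _ _ <|
      (ReparEquiv.refl r.1).of_comp (hΦ (incl r)) isRepar_id (hfac (incl r)) fun _ => rfl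
  · exact Quot.ind fun pp => Quot.sound ⟨Φ pp, id, hΦ pp, isRepar_id, (funext (hfac pp)).symm⟩
  · exact continuous_quot_lift _ (continuous_quot_mk.comp (continuous_subtype_val.subtype_mk _))
  · exact continuous_quot_lift _ (continuous_quotMk_regularization Reg Φ hΦ hfac)
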